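/- arXiv:0809.3425 — 4 statements merged into one kernel-verified Lean document; each statement's English description precedes it below -/
import Mathlib

section
/- For every ordinal α < ω₁^CK there is a computable (decidable) well-founded binary relation on the natural numbers whose ordinal height is exactly α. -/
namespace AutoStruct

/-! ### Regular languages, convolutions, regular relations -/

/-- A language is regular if it is accepted by a DFA with finitely many states. -/
def IsRegularLang {α : Type} (L : Set (List α)) : Prop :=
  ∃ (σ : Type) (_ : Fintype σ) (M : DFA α σ), M.accepts = L

/-- Convolution of a pair of words, using `none` as the padding symbol `◇`. -/
def conv2 {α : Type} (u v : List α) : List (Option α × Option α) :=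
  (List.range (max u.length v.length)).map fun k => (u[k]?, v[k]?)

/-- Convolution of an `n`-tuple of words, using `none` as the padding symbol `◇`. -/
def conv {α : Type} {n : ℕ} (w : Fin n → List α) : List (Fin n → Option α) :=
  (List.range (Finset.univ.sup fun i => (w i).length)).map fun k i => (w i)[k]?

/-- A binary relation on words is regular if the language of convolutions of its pairs
is regular. -/
def IsRegularRel2 {α : Type} (r : List α → List α → Prop) : Prop :=
  IsRegularLang {w | ∃ u v, r u v ∧ w = conv2 u v}

/-- An `n`-ary relation on words is regular if the language of convolutions of its tuples
is regular. -/
def IsRegularRel {α : Type} {n : ℕ} (R : (Fin n → List α) → Prop) : Prop :=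
  IsRegularLang {w | ∃ t, R t ∧ w = conv t}

/-! ### Ordinal heights of well-founded relations -/

/-- The rank `r_A(x) = sup { r_A(y) + 1 : (y,x) ∈ R }` of an element of a well-founded
relation. -/
noncomputable def wfRank {β : Type} {r : β → β → Prop} (h : WellFounded r) (x : β) :
    Ordinal :=
  (h.apply x).rank

/-- The ordinal height `r(A) = sup { r_A(x) : x ∈ A }` of a well-founded relation. -/
noncomputable def relHeight {β : Type} {r : β → β → Prop} (h : WellFounded r) : Ordinal :=
  ⨆ x, wfRank h x

/-! ### Computable ordinals -/

/-- An ordinal is computable if it is the order type of a computable (decidable) well-ordering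
of (a decidable set of) natural numbers. -/
def IsComputableOrdinal (α : Ordinal) : Prop :=
  ∃ (A : Set ℕ) (r : ℕ → ℕ → Prop) (_ : ComputablePred fun n => n ∈ A)
    (_ : ComputablePred fun p : ℕ × ℕ => r p.1 p.2)
    (hwo : IsWellOrder {n // n ∈ A} fun x y => r x.1 y.1),
    @Ordinal.type _ _ hwo = α

/-- `ω₁^CK`, the least non-computable ordinal. -/
noncomputable def omega1CK : Ordinal :=
  sInf {α | ¬ IsComputableOrdinal α}

/-! ### Scott rank machinery for relational structures -/

section ScottRank

variable {D : Type}

/-- Atomic (quantifier-free) equivalence of two tuples in a relational structure with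
relations `rel i` of arity `ar i`: the tuples satisfy the same quantifier-free formulas. -/
def atomEquiv {ν : ℕ} {ar : Fin ν → ℕ} (rel : (i : Fin ν) → (Fin (ar i) → D) → Prop)
    {k : ℕ} (a b : Fin k → D) : Prop :=
  (∀ i j, a i = a j ↔ b i = b j) ∧
  ∀ (i : Fin ν) (f : Fin (ar i) → Fin k), rel i (a ∘ f) ↔ rel i (b ∘ f)

/-- The back-and-forth equivalence relations `ā ≡^α b̄` on tuples of a relational
structure. -/
noncomputable def bfEquiv {ν : ℕ} {ar : Fin ν → ℕ}
    (rel : (i : Fin ν) → (Fin (ar i) → D) → Prop)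
    (α : Ordinal) (k : ℕ) (a b : Fin k → D) : Prop :=
  if α = 0 then atomEquiv rel a b
  else ∀ β < α,
    (∀ (l : ℕ) (c : Fin l → D), ∃ d : Fin l → D,
      bfEquiv rel β (k + l) (Fin.append a c) (Fin.append b d)) ∧
    (∀ (l : ℕ) (d : Fin l → D), ∃ c : Fin l → D,
      bfEquiv rel β (k + l) (Fin.append a c) (Fin.append b d))
termination_by α
decreasing_by all_goals assumption

/-- An automorphism of a relational structure. -/
def IsAutomorphism {ν : ℕ} {ar : Fin ν → ℕ} (rel : (i : Fin ν) → (Fin (ar i) → D) → Prop)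
    (g : D ≃ D) : Prop :=
  ∀ (i : Fin ν) (t : Fin (ar i) → D), rel i t ↔ rel i fun j => g (t j)

/-- The Scott rank of a tuple: the least `β` such that `≡^β`-equivalence to the tuple implies
being in the same automorphism orbit. -/
noncomputable def tupleSR {ν : ℕ} {ar : Fin ν → ℕ}
    (rel : (i : Fin ν) → (Fin (ar i) → D) → Prop) {k : ℕ} (a : Fin k → D) : Ordinal :=
  sInf {β | ∀ b : Fin k → D, bfEquiv rel β k a b →
    ∃ g : D ≃ D, IsAutomorphism rel g ∧ ∀ i, g (a i) = b i}

/-- The Scott rank of a relational structure: the least ordinal greater than the Scott ranks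
of all finite tuples. -/
noncomputable def scottRank {ν : ℕ} {ar : Fin ν → ℕ}
    (rel : (i : Fin ν) → (Fin (ar i) → D) → Prop) : Ordinal :=
  sInf {γ | ∀ (k : ℕ) (a : Fin k → D), tupleSR rel a < γ}

end ScottRank

/-! ### Word structures: automatic and computable structures -/

/-- A structure `(A; R₁, …, R_ν)` whose domain is a set of words over the alphabet `α`,
with `ν` relations, the `i`-th of arity `ar i`. -/
structure WordStructure (α : Type) (ν : ℕ) (ar : Fin ν → ℕ) where
  dom : Set (List α)
  rel : (i : Fin ν) → (Fin (ar i) → List α) → Prop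
  rel_dom : ∀ i t, rel i t → ∀ j, t j ∈ dom

/-- The relations of a word structure, restricted to (the subtype of) its domain. -/
def WordStructure.relOn {α : Type} {ν : ℕ} {ar : Fin ν → ℕ} (S : WordStructure α ν ar) :
    (i : Fin ν) → (Fin (ar i) → ↥S.dom) → Prop :=
  fun i t => S.rel i fun j => ↑(t j)

/-- A word structure is automatic if its domain is a regular language and all its relations
are regular. -/
def WordStructure.IsAutomatic {α : Type} {ν : ℕ} {ar : Fin ν → ℕ}
    (S : WordStructure α ν ar) : Prop :=
  IsRegularLang S.dom ∧ ∀ i, IsRegularRel (S.rel i)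

/-- A word structure is computable if its domain and all its relations are computable. -/
def WordStructure.IsComputableStr {α : Type} [Primcodable α] {ν : ℕ} {ar : Fin ν → ℕ}
    (S : WordStructure α ν ar) : Prop :=
  ComputablePred (fun w : List α => w ∈ S.dom) ∧
    ∀ i, ComputablePred fun t : Fin (ar i) → List α => S.rel i t

/-- The Scott rank of a word structure. -/
noncomputable def WordStructure.SR {α : Type} {ν : ℕ} {ar : Fin ν → ℕ}
    (S : WordStructure α ν ar) : Ordinal :=
  scottRank S.relOn

/-! ### Abstract relational structures, isomorphism, ω-fold disjoint union -/

/-- An abstract relational structure with `ν` relations of arities `ar`. -/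
structure RelStruct (ν : ℕ) (ar : Fin ν → ℕ) where
  carrier : Type
  rel : (i : Fin ν) → (Fin (ar i) → carrier) → Prop

/-- The abstract relational structure underlying a word structure. -/
def WordStructure.toRelStruct {α : Type} {ν : ℕ} {ar : Fin ν → ℕ}
    (S : WordStructure α ν ar) : RelStruct ν ar :=
  ⟨↥S.dom, S.relOn⟩

/-- Isomorphism of abstract relational structures. -/
def RelStruct.Iso {ν : ℕ} {ar : Fin ν → ℕ} (S T : RelStruct ν ar) : Prop :=
  ∃ g : S.carrier ≃ T.carrier, ∀ i t, S.rel i t ↔ T.rel i fun j => g (t j)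

/-- The ω-fold disjoint union of an abstract relational structure: countably many disjoint
copies, a relation holding of a tuple iff all components lie in the same copy and the
corresponding tuple satisfies the relation in the original structure. -/
def omegaFold {ν : ℕ} {ar : Fin ν → ℕ} (S : RelStruct ν ar) : RelStruct ν ar :=
  ⟨S.carrier × ℕ, fun i t => (∀ j j', (t j).2 = (t j').2) ∧ S.rel i fun j => (t j).1⟩

/-! ### Trees and Cantor–Bendixson rank -/

/-- `(T, le)` is a partial order tree: `le` is a partial order with a least element in which
every set `{x : x ≤ y}` is finite and linearly ordered. -/
def IsPOTree {T : Type} (le : T → T → Prop) : Prop :=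
  (∀ x, le x x) ∧ (∀ x y z, le x y → le y z → le x z) ∧
  (∀ x y, le x y → le y x → x = y) ∧
  (∃ r, ∀ x, le r x) ∧
  (∀ y, {x | le x y}.Finite ∧ ∀ x z, le x y → le z y → le x z ∨ le z x)

/-- `(T, S)` is a successor tree: the reflexive–transitive closure of `S` is a partial order
tree. -/
def IsSuccTree {T : Type} (S : T → T → Prop) : Prop :=
  IsPOTree (Relation.ReflTransGen S)

/-- The derivative of (a subset of) a successor tree: the set of nodes lying on at least two
distinct infinite paths within the subset. -/
def treeDeriv {T : Type} (S : T → T → Prop) (X : Set T) : Set T :=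
  {x ∈ X | ∃ p q : ℕ → T, p 0 = x ∧ q 0 = x ∧ (∀ n, p n ∈ X) ∧ (∀ n, q n ∈ X) ∧
    (∀ n, S (p n) (p (n + 1))) ∧ (∀ n, S (q n) (q (n + 1))) ∧ p ≠ q}

/-- The transfinite iteration of the tree derivative, starting from the whole tree. -/
noncomputable def treeDerivIter {T : Type} (S : T → T → Prop) (α : Ordinal) : Set T :=
  Ordinal.limitRecOn α Set.univ (fun _ X => treeDeriv S X)
    (fun o _ ih => ⋂ (β : Ordinal) (h : β < o), ih β h)

/-- The Cantor–Bendixson rank of a successor tree: the least `α` such that the `α`-th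
derivative equals the `α+1`-st derivative. -/
noncomputable def CBrank {T : Type} (S : T → T → Prop) : Ordinal :=
  sInf {α | treeDerivIter S (α + 1) = treeDerivIter S α}

/-- The derivative of (a subset of) a partial order tree: the set of nodes lying on at least
two distinct infinite paths (i.e. admitting two eventually incomparable infinite strictly
increasing chains) within the subset. -/
def poDeriv {T : Type} (le : T → T → Prop) (X : Set T) : Set T :=
  {x ∈ X | ∃ p q : ℕ → T, p 0 = x ∧ q 0 = x ∧ (∀ n, p n ∈ X) ∧ (∀ n, q n ∈ X) ∧
    (∀ n, le (p n) (p (n + 1)) ∧ p n ≠ p (n + 1)) ∧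
    (∀ n, le (q n) (q (n + 1)) ∧ q n ≠ q (n + 1)) ∧
    ∃ n m, ¬ le (p n) (q m) ∧ ¬ le (q m) (p n)}

noncomputable def poDerivIter {T : Type} (le : T → T → Prop) (α : Ordinal) : Set T :=
  Ordinal.limitRecOn α Set.univ (fun _ X => poDeriv le X)
    (fun o _ ih => ⋂ (β : Ordinal) (h : β < o), ih β h)

/-- The Cantor–Bendixson rank of a partial order tree. -/
noncomputable def CBrankPO {T : Type} (le : T → T → Prop) : Ordinal :=
  sInf {α | poDerivIter le (α + 1) = poDerivIter le α}

/-- The product of two successor trees, where `r₂` is the root of the second tree. -/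
def prodSucc {T₁ T₂ : Type} (S₁ : T₁ → T₁ → Prop) (S₂ : T₂ → T₂ → Prop) (r₂ : T₂) :
    T₁ × T₂ → T₁ × T₂ → Prop :=
  fun p q =>
    (p.2 = r₂ ∧ ((q.1 = p.1 ∧ S₂ p.2 q.2) ∨ (S₁ p.1 q.1 ∧ p.2 = q.2))) ∨
    (p.2 ≠ r₂ ∧ q.1 = p.1 ∧ S₂ p.2 q.2)

/-! ### Locally finite graphs -/

/-- A directed graph is locally finite if every vertex has finitely many neighbours
(in either direction). -/
def LocallyFiniteGraph {V : Type} (E : V → V → Prop) : Prop :=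
  ∀ x, {y | E x y ∨ E y x}.Finite

/-- A graph as a relational structure with one binary relation. -/
def graphRel {V : Type} (E : V → V → Prop) : (i : Fin 1) → (Fin 2 → V) → Prop :=
  fun _ t => E (t 0) (t 1)

/-- `ball E U n` is the `n`-neighbourhood of `U`: vertices reachable from `U` by `n` or fewer
edges (traversed in either direction). -/
def ball {V : Type} (E : V → V → Prop) (U : Set V) : ℕ → Set V
  | 0 => U
  | n + 1 => ball E U n ∪ {v | ∃ u ∈ ball E U n, E u v ∨ E v u}

/-- Connectivity with respect to the symmetrization of `E`. -/
def conn {V : Type} (E : V → V → Prop) : V → V → Prop :=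
  Relation.ReflTransGen fun u v => E u v ∨ E v u

end AutoStruct

/-!
Take a computable well-ordering `(A, r)` of type `α`, shift it up by one and put `0` above all
of it. In a well-ordering the rank of an element is its position `typein`, so the new top has
rank `α` and every other element has rank below `α`.
-/

section ComputablePred

variable {α : Type*} [Primcodable α] {p q : α → Prop}

theorem ComputablePred.and (hp : ComputablePred p) (hq : ComputablePred q) :
    ComputablePred fun a => p a ∧ q a := by
  classical
  exact Computable.computablePred
    ((Primrec.and.to_comp.comp hp.decide hq.decide).of_eq fun a => by simp)

theorem ComputablePred.or (hp : ComputablePred p) (hq : ComputablePred q) :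
    ComputablePred fun a => p a ∨ q a := by
  classical
  exact Computable.computablePred
    ((Primrec.or.to_comp.comp hp.decide hq.decide).of_eq fun a => by simp)

theorem ComputablePred.comp {β : Type*} [Primcodable β] {p : β → Prop} (hp : ComputablePred p)
    {f : α → β} (hf : Computable f) : ComputablePred fun a => p (f a) :=
  ComputablePred.computable_of_manyOneReducible ⟨f, hf, fun _ => Iff.rfl⟩ hp

end ComputablePred

namespace AutoStruct

theorem isComputableOrdinal_of_lt_omega1CK {α : Ordinal} (hα : α < omega1CK) :
    IsComputableOrdinal α :=
  not_not.1 fun h => hα.not_ge (csInf_le' h)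

theorem wfRank_eq_of_lt_of_exists_le {β : Type} {s : β → β → Prop} (hs : WellFounded s)
    (φ : β → Ordinal) (hlt : ∀ a b, s a b → φ a < φ b)
    (hle : ∀ b, ∀ o < φ b, ∃ a, s a b ∧ o ≤ φ a) : wfRank hs = φ := by
  funext b
  induction b using hs.induction with
  | _ b ih =>
    rw [wfRank, Acc.rank_eq]
    refine le_antisymm (Ordinal.iSup_le fun a => ?_) (le_of_forall_lt fun o ho => ?_)
    · rw [Order.succ_le_iff]
      exact (ih a a.2).trans_lt (hlt _ _ a.2)
    · obtain ⟨a, hab, hoa⟩ := hle b o ho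
      calc o ≤ φ a := hoa
        _ < Order.succ (wfRank hs a) := by rw [ih a hab]; exact Order.lt_succ _
        _ ≤ _ := Ordinal.le_iSup (fun a : {a // s a b} => Order.succ (wfRank hs a)) ⟨a, hab⟩

section SuccTop

variable (A : Set ℕ) (r : ℕ → ℕ → Prop)

def succTop : ℕ → ℕ → Prop
  | 0, _ => False
  | m + 1, 0 => m ∈ A
  | m + 1, n + 1 => m ∈ A ∧ n ∈ A ∧ r m n

theorem succTop_iff (m n : ℕ) :
    succTop A r m n ↔ m ≠ 0 ∧ m - 1 ∈ A ∧ (n = 0 ∨ n - 1 ∈ A ∧ r (m - 1) (n - 1)) := by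
  cases m <;> cases n <;> simp [succTop]

theorem computablePred_succTop (hA : ComputablePred fun n => n ∈ A)
    (hr : ComputablePred fun p : ℕ × ℕ => r p.1 p.2) :
    ComputablePred fun p : ℕ × ℕ => succTop A r p.1 p.2 := by
  have hpred : Computable fun n : ℕ => n - 1 := Primrec.pred.to_comp
  have hzero : ComputablePred fun n : ℕ => n = 0 :=
    (Primrec.eq.comp Primrec.id (Primrec.const 0)).computablePred
  refine (hzero.not.comp Computable.fst |>.and <| (hA.comp (hpred.comp Computable.fst)).and <|
    (hzero.comp Computable.snd).or <| (hA.comp (hpred.comp Computable.snd)).and <|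
      hr.comp ((hpred.comp Computable.fst).pair (hpred.comp Computable.snd))).of_eq
    fun p => (succTop_iff A r p.1 p.2).symm

variable [IsWellOrder {n // n ∈ A} fun x y => r x.1 y.1]

open Classical in
noncomputable def succTopRank : ℕ → Ordinal
  | 0 => Ordinal.type fun x y : {n // n ∈ A} => r x.1 y.1
  | n + 1 =>
    if h : n ∈ A then Ordinal.typein (fun x y : {n // n ∈ A} => r x.1 y.1) ⟨n, h⟩ else 0

theorem succTopRank_succ_of_mem {n : ℕ} (hn : n ∈ A) :
    succTopRank A r (n + 1) = Ordinal.typein (fun x y : {n // n ∈ A} => r x.1 y.1) ⟨n, hn⟩ :=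
  dif_pos hn

theorem succTopRank_succ_of_notMem {n : ℕ} (hn : n ∉ A) : succTopRank A r (n + 1) = 0 :=
  dif_neg hn

theorem succTopRank_lt_of_succTop :
    ∀ m n, succTop A r m n → succTopRank A r m < succTopRank A r n
  | m + 1, 0, (hm : m ∈ A) => by
    rw [succTopRank_succ_of_mem A r hm]
    exact Ordinal.typein_lt_type _ _
  | m + 1, n + 1, ⟨hm, hn, hmn⟩ => by
    rw [succTopRank_succ_of_mem A r hm, succTopRank_succ_of_mem A r hn]
    exact (Ordinal.typein_lt_typein (fun x y : {n // n ∈ A} => r x.1 y.1)).2 hmn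

theorem exists_succTop_le_succTopRank :
    ∀ n, ∀ o < succTopRank A r n, ∃ m, succTop A r m n ∧ o ≤ succTopRank A r m
  | 0, o, ho => by
    obtain ⟨y, rfl⟩ := Ordinal.typein_surj _ ho
    exact ⟨y.1 + 1, y.2, (succTopRank_succ_of_mem A r y.2).ge⟩
  | n + 1, o, ho => by
    by_cases hn : n ∈ A
    · rw [succTopRank_succ_of_mem A r hn] at ho
      obtain ⟨y, rfl⟩ := Ordinal.typein_surj _ (ho.trans (Ordinal.typein_lt_type _ _))
      have hyn : r y.1 n := (Ordinal.typein_lt_typein (fun x y : {n // n ∈ A} => r x.1 y.1)).1 ho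
      exact ⟨y.1 + 1, ⟨y.2, hn, hyn⟩, (succTopRank_succ_of_mem A r y.2).ge⟩
    · rw [succTopRank_succ_of_notMem A r hn] at ho
      exact absurd ho not_lt_zero

theorem succTopRank_le_zero : ∀ n, succTopRank A r n ≤ succTopRank A r 0
  | 0 => le_rfl
  | n + 1 => by
    by_cases hn : n ∈ A
    · rw [succTopRank_succ_of_mem A r hn]
      exact (Ordinal.typein_lt_type _ _).le
    · rw [succTopRank_succ_of_notMem A r hn]
      exact zero_le

end SuccTop

/-- For every ordinal `α < ω₁^CK` there is a computable (decidable) well-founded binary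
relation on the natural numbers whose ordinal height is exactly `α`. -/
theorem computable_wf_relation_of_height (α : Ordinal) (hα : α < omega1CK) :
    ∃ (r : ℕ → ℕ → Prop) (_ : ComputablePred fun p : ℕ × ℕ => r p.1 p.2)
      (hwf : WellFounded r), relHeight hwf = α := by
  obtain ⟨A, r, hA, hr, hwo, rfl⟩ := isComputableOrdinal_of_lt_omega1CK hα
  have hlt := succTopRank_lt_of_succTop A r
  have hwf : WellFounded (succTop A r) := Subrelation.wf (hlt _ _) (InvImage.wf _ wellFounded_lt)
  refine ⟨succTop A r, computablePred_succTop A r hA hr, hwf, ?_⟩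
  rw [relHeight, wfRank_eq_of_lt_of_exists_le hwf _ hlt (exists_succTop_le_succTopRank A r)]
  exact le_antisymm (Ordinal.iSup_le (succTopRank_le_zero A r)) (Ordinal.le_iSup _ 0)

end AutoStruct
end

section
/- For any deterministic one-tape Turing machine there is a reversible deterministic (multi-tape) Turing machine which accepts the same language, where a deterministic Turing machine is reversible if every configuration has at most one predecessor under the step relation (equivalently, its configuration graph consists only of finite chains and chains of order type ω). -/
namespace AutoStruct

/-! Bennett's construction. The simulating machine keeps the tape of `M` as two stacks, one
for each side of the head, with the scanned symbol in its internal state, and it has a third,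
history stack: every step first pushes the label and internal state it starts from. Each
statement of the machine changes the tape stacks invertibly once that record is known, so the
previous configuration is a function of the current one and the machine is reversible. -/

namespace HistoryMachine

open Turing Function StateTransition

instance : Fintype Dir := ⟨{.left, .right}, by rintro (_ | _) <;> simp⟩

instance {Γ : Type} [Fintype Γ] : Fintype (TM0.Stmt Γ) :=
  Fintype.ofEquiv (Dir ⊕ Γ)
    { toFun := Sum.elim .move .write
      invFun := fun | .move d => .inl d | .write a => .inr a
      left_inv := by rintro (_ | _) <;> rfl
      right_inv := by rintro (_ | _) <;> rfl }

def _root_.Turing.Dir.opp : Dir → Dir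
  | .left => .right
  | .right => .left

theorem headI_eq_head?_getD {α : Type} [Inhabited α] (l : List α) :
    l.headI = l.head?.getD default := by
  cases l <;> rfl

theorem head?_toList_append_tail {α : Type} (l : List α) : l.head?.toList ++ l.tail = l := by
  cases l <;> rfl

inductive Stack
  | side (d : Dir)
  | history
  deriving DecidableEq, Fintype

variable (Γ Λ : Type)

inductive Lab
  | start
  | go (q : Λ)
  | act (q : Λ) (st : TM0.Stmt Γ)
  deriving Fintype

instance : Inhabited (Lab Γ Λ) := ⟨.start⟩

abbrev Alph : Stack → Type
  | .side _ => Γ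
  | .history => Lab Γ Λ × (Γ × Option Γ)

instance [Fintype Γ] [Fintype Λ] : ∀ k, Fintype (Alph Γ Λ k)
  | .side _ => inferInstanceAs (Fintype Γ)
  | .history => inferInstanceAs (Fintype (Lab Γ Λ × (Γ × Option Γ)))

abbrev Stacks := ∀ k, List (Alph Γ Λ k)

abbrev Cfg := TM2.Cfg (Alph Γ Λ) (Lab Γ Λ) (Γ × Option Γ)

variable {Γ Λ}

/-- `v` is the internal state after the statement at `l`; its second component is what that
statement popped. -/
def restore : Lab Γ Λ → Γ × Option Γ → Stacks Γ Λ → Stacks Γ Λ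
  | .start, v, S => update S (.side .right) (v.2.toList ++ S (.side .right))
  | .go _, _, S | .act _ (.write _), _, S => S
  | .act _ (.move d), v, S =>
      update (update S (.side d.opp) (S (.side d.opp)).tail) (.side d)
        (v.2.toList ++ S (.side d))

def undo (c : Cfg Γ Λ) : Cfg Γ Λ :=
  match c.stk .history with
  | [] => c
  | (l, v) :: h => ⟨some l, v, update (restore l c.var c.stk) .history h⟩

section Tape

variable [Inhabited Γ]

/-- The second component keeps the raw result of the pop, so that a pop from an empty stack
can be told apart from one that returned the blank. -/
def scan (_ : Γ × Option Γ) (o : Option Γ) : Γ × Option Γ := (o.getD default, o)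

def applyStmt : TM0.Stmt Γ → Tape Γ → Tape Γ
  | .move d, T => T.move d
  | .write a, T => T.write a

def Encodes (T : Tape Γ) (v : Γ × Option Γ) (S : Stacks Γ Λ) : Prop :=
  v.1 = T.head ∧ ListBlank.mk (S (.side .left)) = T.left ∧
    ListBlank.mk (S (.side .right)) = T.right

theorem Encodes.update_history {T : Tape Γ} {v : Γ × Option Γ} {S : Stacks Γ Λ}
    (h : Encodes T v S) (H : List (Alph Γ Λ .history)) : Encodes T v (update S .history H) := by
  simpa [Encodes] using h

end Tape

variable [Inhabited Γ] [Inhabited Λ] (M : TM0.Machine Γ Λ)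

theorem tm0_step_eq_map (q : Λ) (T : Tape Γ) :
    TM0.step M ⟨q, T⟩ = (M q T.head).map fun p => ⟨p.1, applyStmt p.2 T⟩ := by
  rcases h : M q T.head with _ | ⟨q', _ | _⟩ <;> simp [TM0.step, h, applyStmt]

def body : Lab Γ Λ → TM2.Stmt (Alph Γ Λ) (Lab Γ Λ) (Γ × Option Γ)
  | .start => .pop (.side .right) scan <| .goto fun _ => .go default
  | .go q => .branch (fun v => (M q v.1).isSome)
      (.goto fun v => (M q v.1).elim (.go q) fun p => .act p.1 p.2) .halt
  | .act q (.write a) => .load (fun v => (a, v.2)) <| .goto fun _ => .go q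
  | .act q (.move d) =>
      .push (.side d.opp) (·.1) <| .pop (.side d) scan <| .goto fun _ => .go q

def machine (l : Lab Γ Λ) : TM2.Stmt (Alph Γ Λ) (Lab Γ Λ) (Γ × Option Γ) :=
  .push .history (fun v => (l, v)) (body M l)

theorem stk_history_stepAux_body (l : Lab Γ Λ) (v : Γ × Option Γ) (S : Stacks Γ Λ) :
    (TM2.stepAux (body M l) v S).stk .history = S .history := by
  rcases l with _ | q | ⟨q, d | a⟩
  · simp [body]
  · cases h : (M q v.1).isSome <;> simp [body, h]
  · cases d <;> simp [body, Dir.opp]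
  · simp [body]

theorem restore_stepAux_body (l : Lab Γ Λ) (v : Γ × Option Γ) (S : Stacks Γ Λ) :
    restore l (TM2.stepAux (body M l) v S).var (TM2.stepAux (body M l) v S).stk = S := by
  rcases l with _ | q | ⟨q, d | a⟩
  · simp [body, restore, scan, head?_toList_append_tail]
  · cases h : (M q v.1).isSome <;> simp [body, restore, h]
  · funext k
    cases d <;> rcases k with ⟨_ | _⟩ | _ <;>
      simp [body, restore, scan, Dir.opp, head?_toList_append_tail]
  · simp [body, restore]

theorem undo_eq_of_step_eq {c c' : Cfg Γ Λ} (h : TM2.step (machine M) c = some c') :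
    undo c' = c := by
  obtain ⟨_ | l, v, S⟩ := c
  · cases h
  · cases h
    have hist := stk_history_stepAux_body M l v (update S .history ((l, v) :: S .history))
    simp only [update_self] at hist
    simp [machine, undo, hist, restore_stepAux_body]

theorem step_injective {c c₁ c₂ : Cfg Γ Λ} (h₁ : TM2.step (machine M) c₁ = some c)
    (h₂ : TM2.step (machine M) c₂ = some c) : c₁ = c₂ :=
  (undo_eq_of_step_eq M h₁).symm.trans (undo_eq_of_step_eq M h₂)

/-- When `M` halts, the related configuration is the halted one, one step past `go q`: the
halting of the two machines must happen simultaneously. -/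
def Simulates (c : TM0.Cfg Γ Λ) (c' : Cfg Γ Λ) : Prop :=
  Encodes c.Tape c'.var c'.stk ∧ c'.l = (M c.q c.Tape.head).map fun _ => .go c.q

theorem Encodes.stepAux_body_act {T : Tape Γ} {v : Γ × Option Γ} {S : Stacks Γ Λ}
    (h : Encodes T v S) (q : Λ) (st : TM0.Stmt Γ) :
    Encodes (applyStmt st T) (TM2.stepAux (body M (.act q st)) v S).var
      (TM2.stepAux (body M (.act q st)) v S).stk := by
  obtain ⟨hhead, hleft, hright⟩ := h
  rcases st with ⟨_ | _⟩ | a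
  all_goals refine ⟨?_, ?_, ?_⟩ <;> simp [body, applyStmt, scan, Dir.opp, Tape.move, Tape.write,
    ← hleft, ← hright, hhead, headI_eq_head?_getD]

theorem Encodes.step_act {T : Tape Γ} {v : Γ × Option Γ} {S : Stacks Γ Λ}
    (h : Encodes T v S) (q : Λ) (st : TM0.Stmt Γ) :
    ∃ v' S', TM2.step (machine M) ⟨some (.act q st), v, S⟩ = some ⟨some (.go q), v', S'⟩ ∧
      Encodes (applyStmt st T) v' S' := by
  have h' := h.update_history ((.act q st, v) :: S .history)
  refine ⟨_, _, ?_, h'.stepAux_body_act M q st⟩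
  rcases st with ⟨_ | _⟩ | _ <;> rfl

theorem step_go_of_some {q q' : Λ} {st : TM0.Stmt Γ} {v : Γ × Option Γ} {S : Stacks Γ Λ}
    (hM : M q v.1 = some (q', st)) : TM2.step (machine M) ⟨some (.go q), v, S⟩ =
      some ⟨some (.act q' st), v, update S .history ((.go q, v) :: S .history)⟩ := by
  simp [machine, body, hM]

theorem reaches_simulates_of_go {q : Λ} {T : Tape Γ} {v : Γ × Option Γ} {S : Stacks Γ Λ}
    (h : Encodes T v S) : ∃ c, Simulates M ⟨q, T⟩ c ∧
      Reaches (TM2.step (machine M)) ⟨some (.go q), v, S⟩ c := by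
  cases hM : M q T.head with
  | some p => exact ⟨⟨some (.go q), v, S⟩, ⟨h, by simp [hM]⟩, .refl⟩
  | none =>
    refine ⟨⟨none, v, update S .history ((.go q, v) :: S .history)⟩,
      ⟨h.update_history _, by simp [hM]⟩, .single ?_⟩
    simp [machine, body, h.1, hM]

theorem respects : Respects (TM0.step M) (TM2.step (machine M)) (Simulates M) := by
  rintro ⟨q, T⟩ ⟨l, v, S⟩ ⟨hT, hl⟩
  dsimp only at hT hl
  rw [tm0_step_eq_map]
  cases hM : M q T.head with
  | none =>
    rw [hM, Option.map_none] at hl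
    simp [hl]
  | some p =>
    obtain ⟨q', st⟩ := p
    rw [hM, Option.map_some] at hl
    subst hl
    have hgo := step_go_of_some M (S := S) (hT.1 ▸ hM)
    obtain ⟨v', S', hact, hT'⟩ := (hT.update_history _).step_act M q' st
    obtain ⟨c, hc, hreach⟩ := reaches_simulates_of_go M hT'
    exact ⟨c, hc, .head hgo (.head' hact hreach)⟩

theorem reaches_simulates_init (l : List Γ) : ∃ c, Simulates M (TM0.init l) c ∧
    Reaches (TM2.step (machine M)) (TM2.init (.side .right) l) c := by
  obtain ⟨v, S, hstart, hS⟩ : ∃ v S, TM2.step (machine M) (TM2.init (.side .right) l) =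
      some ⟨some (.go default), v, S⟩ ∧ Encodes (Tape.mk₁ l) v S :=
    ⟨_, _, rfl, by simp [Encodes, scan, Tape.mk₁, Tape.mk₂, Tape.mk', headI_eq_head?_getD]⟩
  obtain ⟨c, hc, hreach⟩ := reaches_simulates_of_go M hS
  exact ⟨c, hc, .head hstart hreach⟩

theorem eval_dom_iff (l : List Γ) :
    (TM0.eval M l).Dom ↔ (TM2.eval (machine M) (.side .right) l).Dom := by
  obtain ⟨c, hc, hreach⟩ := reaches_simulates_init M l
  change (StateTransition.eval (TM0.step M) (TM0.init l)).Dom ↔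
    (StateTransition.eval (TM2.step (machine M)) _).Dom
  rw [reaches_eval hreach]
  exact (tr_eval_dom (respects M) hc).symm

end HistoryMachine

/-- **Lemma 7 (Bennett).** For any deterministic one-tape Turing machine there is a reversible
deterministic multi-tape Turing machine (here: a multi-stack machine in the `TM2` model, with
an injective coding of the input alphabet) accepting the same language, where reversible
means that every configuration has at most one predecessor under the step relation. -/
theorem exists_reversible_turing_machine {Γ : Type} [Inhabited Γ] [Fintype Γ]
    {Λ : Type} [Inhabited Λ] [Fintype Λ] (M : Turing.TM0.Machine Γ Λ) :
    ∃ (K : Type) (_ : DecidableEq K) (_ : Fintype K)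
      (Γ' : K → Type) (_ : ∀ k, Fintype (Γ' k))
      (Λ' : Type) (_ : Inhabited Λ') (_ : Fintype Λ')
      (σ : Type) (_ : Inhabited σ) (_ : Fintype σ)
      (M' : Λ' → Turing.TM2.Stmt Γ' Λ' σ)
      (k₀ : K) (ι : Γ → Γ' k₀),
      Function.Injective ι ∧
      (∀ c c₁ c₂ : Turing.TM2.Cfg Γ' Λ' σ,
        Turing.TM2.step M' c₁ = some c → Turing.TM2.step M' c₂ = some c → c₁ = c₂) ∧
      (∀ l : List Γ, (Turing.TM0.eval M l).Dom ↔ (Turing.TM2.eval M' k₀ (l.map ι)).Dom) :=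
  ⟨HistoryMachine.Stack, inferInstance, inferInstance, HistoryMachine.Alph Γ Λ, inferInstance,
    HistoryMachine.Lab Γ Λ, inferInstance, inferInstance, Γ × Option Γ, inferInstance,
    inferInstance, HistoryMachine.machine M, .side .right, id, Function.injective_id,
    fun _ _ _ => HistoryMachine.step_injective M, fun l => by
      simpa using HistoryMachine.eval_dom_iff M l⟩

end AutoStruct
end

section
/- If G = (V,E) is a locally finite directed graph, then the Scott rank of G is at most 3; in fact, for any finite tuples ā, b̄ from V of equal length with ā ≡² b̄, there is an automorphism of G mapping ā to b̄. -/
/-!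
If `ā ≡² b̄`, then for every finite tuple `c̄` there is `d̄` with `ā c̄ ≡¹ b̄ d̄`. Let `c̄`
enumerate the `n`-ball around `ā`, which is finite by local finiteness. Then `c̄ ↦ d̄` is an
isomorphism of the `n`-ball around `ā` onto the `n`-ball around `b̄`: `≡⁰` makes it preserve
edges, and `≡¹` pulls every neighbour of a `dᵢ` back to a neighbour of `cᵢ`, so the map is
onto. These finite sets of approximations form an inverse system, so König's lemma gives a
coherent sequence of them, that is, an isomorphism `p` from the union of the components of `ā`
onto that of `b̄`. Finally `p` extends to an automorphism, because the components not yet used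
can be matched isomorphism class by isomorphism class.
-/

namespace AutoStruct

open Set Function

structure IsIsoOn {V : Type} (E : V → V → Prop) (f : V → V) (S T : Set V) : Prop where
  bijOn : BijOn f S T
  rel_iff : ∀ ⦃x⦄, x ∈ S → ∀ ⦃y⦄, y ∈ S → (E (f x) (f y) ↔ E x y)

def connClosure {V : Type} (E : V → V → Prop) (U : Set V) : Set V :=
  {v | ∃ u ∈ U, conn E u v}

section Graph

variable {V : Type} {E : V → V → Prop}

namespace IsIsoOn

variable {f g : V → V} {S T W : Set V}

protected lemma id (S : Set V) : IsIsoOn E id S S :=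
  ⟨bijOn_id S, fun _ _ _ _ => Iff.rfl⟩

lemma comp (hg : IsIsoOn E g T W) (hf : IsIsoOn E f S T) : IsIsoOn E (g ∘ f) S W :=
  ⟨hg.bijOn.comp hf.bijOn, fun _ hx _ hy =>
    (hg.rel_iff (hf.bijOn.mapsTo hx) (hf.bijOn.mapsTo hy)).trans (hf.rel_iff hx hy)⟩

lemma invFunOn [Nonempty V] (hf : IsIsoOn E f S T) : IsIsoOn E (invFunOn f S) T S := by
  have hinv := hf.bijOn.invOn_invFunOn
  have hbij := hf.bijOn.symm hinv.symm
  refine ⟨hbij, fun x hx y hy => ?_⟩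
  rw [← hf.rel_iff (hbij.mapsTo hx) (hbij.mapsTo hy), hinv.2 hx, hinv.2 hy]

lemma congr (hf : IsIsoOn E f S T) (h : EqOn f g S) : IsIsoOn E g S T :=
  ⟨hf.bijOn.congr h, fun x hx y hy => by rw [← h hx, ← h hy]; exact hf.rel_iff hx hy⟩

lemma mono (hf : IsIsoOn E f S T) {S' : Set V} (h : S' ⊆ S) : IsIsoOn E f S' (f '' S') :=
  ⟨(hf.bijOn.injOn.mono h).bijOn_image, fun _ hx _ hy => hf.rel_iff (h hx) (h hy)⟩

lemma iUnion {ι : Type} {S T : ι → Set V} (hS : Directed (· ⊆ ·) S)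
    (h : ∀ i, IsIsoOn E f (S i) (T i)) : IsIsoOn E f (⋃ i, S i) (⋃ i, T i) := by
  refine ⟨bijOn_iUnion_of_directed hS fun i => (h i).bijOn, fun x hx y hy => ?_⟩
  obtain ⟨i, hxi⟩ := mem_iUnion.1 hx
  obtain ⟨j, hyj⟩ := mem_iUnion.1 hy
  obtain ⟨l, hil, hjl⟩ := hS i j
  exact (h l).rel_iff (hil hxi) (hjl hyj)

lemma adj_iff (hf : IsIsoOn E f S T) {x y : V} (hx : x ∈ S) (hy : y ∈ S) :
    (E (f x) (f y) ∨ E (f y) (f x)) ↔ (E x y ∨ E y x) :=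
  or_congr (hf.rel_iff hx hy) (hf.rel_iff hy hx)

end IsIsoOn

lemma range_append {α : Type} {k l : ℕ} (a : Fin k → α) (c : Fin l → α) :
    range (Fin.append a c) = range a ∪ range c := by
  ext v
  constructor
  · rintro ⟨j, rfl⟩
    refine Fin.addCases (fun i => ?_) (fun i => ?_) j
    · exact Or.inl ⟨i, (Fin.append_left a c i).symm⟩
    · exact Or.inr ⟨i, (Fin.append_right a c i).symm⟩
  · rintro (⟨i, rfl⟩ | ⟨i, rfl⟩)
    · exact ⟨Fin.castAdd l i, Fin.append_left a c i⟩
    · exact ⟨Fin.natAdd k i, Fin.append_right a c i⟩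

lemma ball_mono (U : Set V) : Monotone (ball E U) :=
  monotone_nat_of_le_succ fun _ => subset_union_left

lemma subset_ball (U : Set V) (n : ℕ) : U ⊆ ball E U n :=
  ball_mono U n.zero_le

lemma ball_finite (hlf : LocallyFiniteGraph E) {U : Set V} (hU : U.Finite) (n : ℕ) :
    (ball E U n).Finite := by
  induction n with
  | zero => exact hU
  | succ n ih =>
    refine ih.union ((ih.biUnion fun u _ => hlf u).subset ?_)
    rintro v ⟨u, hu, huv⟩
    exact mem_biUnion hu huv

lemma iUnion_ball (U : Set V) : ⋃ n, ball E U n = connClosure E U := by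
  ext v
  simp only [mem_iUnion]
  constructor
  · rintro ⟨n, hv⟩
    induction n generalizing v with
    | zero => exact ⟨v, hv, .refl⟩
    | succ n ih =>
      rcases hv with hv | ⟨w, hw, hwv⟩
      · exact ih v hv
      · obtain ⟨u, hu, huw⟩ := ih w hw
        exact ⟨u, hu, huw.tail hwv⟩
  · rintro ⟨u, hu, huv⟩
    induction huv with
    | refl => exact ⟨0, hu⟩
    | tail _ hwv ih =>
      obtain ⟨n, hw⟩ := ih
      exact ⟨n + 1, Or.inr ⟨_, hw, hwv⟩⟩

lemma image_ball_subset_ball_image {f : V → V} {S U : Set V} {n : ℕ} (hS : ball E U n ⊆ S)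
    (hf : ∀ ⦃x⦄, x ∈ S → ∀ ⦃y⦄, y ∈ S → E x y → E (f x) (f y)) :
    f '' ball E U n ⊆ ball E (f '' U) n := by
  induction n with
  | zero => exact subset_rfl
  | succ n ih =>
    have hS' : ball E U n ⊆ S := (ball_mono U n.le_succ).trans hS
    rintro _ ⟨x, hx | ⟨y, hy, hyx⟩, rfl⟩
    · exact Or.inl (ih hS' (mem_image_of_mem f hx))
    · have hxS : x ∈ S := hS (Or.inr ⟨y, hy, hyx⟩)
      refine Or.inr ⟨f y, ih hS' (mem_image_of_mem f hy), ?_⟩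
      exact hyx.imp (hf (hS' hy) hxS) (hf hxS (hS' hy))

lemma ball_image_subset_image_ball {f : V → V} {U : Set V} {n : ℕ}
    (hlift : ∀ r < n, ∀ x ∈ ball E U r, ∀ w, (E (f x) w ∨ E w (f x)) →
      ∃ x', (E x x' ∨ E x' x) ∧ f x' = w) :
    ball E (f '' U) n ⊆ f '' ball E U n := by
  induction n with
  | zero => exact subset_rfl
  | succ n ih =>
    rintro w (hw | ⟨_, hz, hzw⟩)
    · exact image_mono (ball_mono U n.le_succ)
        (ih (fun r hr => hlift r (hr.trans n.lt_succ_self)) hw)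
    · obtain ⟨x, hx, rfl⟩ := ih (fun r hr => hlift r (hr.trans n.lt_succ_self)) hz
      obtain ⟨x', hxx', rfl⟩ := hlift n n.lt_succ_self x hx w hzw
      exact mem_image_of_mem f (Or.inr ⟨x, hx, hxx'⟩)

lemma IsIsoOn.image_ball {f : V → V} {S T U : Set V} {n : ℕ} (hf : IsIsoOn E f S T)
    (hS : ball E U n ⊆ S) (hT : ball E (f '' U) n ⊆ T) :
    f '' ball E U n = ball E (f '' U) n := by
  have hfwd : ∀ r ≤ n, f '' ball E U r ⊆ ball E (f '' U) r := fun r hr =>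
    image_ball_subset_ball_image ((ball_mono U hr).trans hS) fun x hx y hy => (hf.rel_iff hx hy).2
  refine (hfwd n le_rfl).antisymm (ball_image_subset_image_ball fun r hr x hx w hw => ?_)
  have hwT : w ∈ T :=
    hT <| ball_mono _ hr (Or.inr ⟨f x, hfwd r hr.le (mem_image_of_mem f hx), hw⟩)
  obtain ⟨x', hx', rfl⟩ := hf.bijOn.surjOn hwT
  exact ⟨x', (hf.adj_iff ((ball_mono U hr.le).trans hS hx) hx').1 hw, rfl⟩

end Graph

lemma exists_perm_extend_of_finite {α : Type*} {s : Set α} (hs : s.Finite) (f : s ↪ α) :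
    ∃ g : α ≃ α, ∀ x : s, g x = f x := by
  rcases finite_or_infinite α with hα | hα
  · exact Cardinal.extend_function_finite f ⟨.refl α⟩
  · exact Cardinal.extend_function_of_lt f
      (hs.lt_aleph0.trans_le (Cardinal.aleph0_le_mk α)) ⟨.refl α⟩

/-- Extend separately inside each class. -/
lemma Setoid.exists_perm_extend {Q : Type*} (t : Setoid Q) {S : Set Q} (hS : S.Finite)
    (f : S ↪ Q) (hf : ∀ q : S, t q (f q)) :
    ∃ σ : Q ≃ Q, (∀ q, t q (σ q)) ∧ ∀ q : S, σ q = f q := by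
  have hfiber : ∀ c : Quotient t, ∃ g : {q // Quotient.mk t q = c} ≃ {q // Quotient.mk t q = c},
      ∀ x : {x : {q // Quotient.mk t q = c} | x.1 ∈ S}, (g x).1 = f ⟨x.1.1, x.2⟩ := by
    intro c
    let fc : {x : {q // Quotient.mk t q = c} | x.1 ∈ S} ↪ {q // Quotient.mk t q = c} :=
      ⟨fun x => ⟨f ⟨x.1.1, x.2⟩, (Quotient.sound (hf _)).symm.trans x.1.2⟩,
        fun x y hxy => by
          ext
          exact Subtype.mk.inj (f.injective (Subtype.mk.inj hxy))⟩
    obtain ⟨g, hg⟩ := exists_perm_extend_of_finite (hS.preimage Subtype.val_injective.injOn) fc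
    exact ⟨g, fun x => congrArg Subtype.val (hg x)⟩
  choose g hg using hfiber
  exact ⟨Equiv.ofFiberEquiv g, fun q => Quotient.exact (Equiv.ofFiberEquiv_map g q).symm,
    fun q => hg _ ⟨⟨q.1, rfl⟩, q.2⟩⟩

section Components

variable {V : Type} (E : V → V → Prop)

def connSetoid : Setoid V where
  r := conn E
  iseqv := ⟨fun _ => .refl,
    fun h => Relation.ReflTransGen.mono (fun _ _ => Or.symm) _ _ (Relation.reflTransGen_swap.2 h),
    .trans⟩

abbrev Component := Quotient (connSetoid E)

def Component.mk (v : V) : Component E := Quotient.mk _ v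

variable {E}

def Component.supp (q : Component E) : Set V := {v | Component.mk E v = q}

lemma Component.mk_eq_mk {v w : V} : Component.mk E v = Component.mk E w ↔ conn E v w :=
  Quotient.eq

lemma Component.mk_out (q : Component E) : Component.mk E q.out = q :=
  Quotient.out_eq q

lemma Component.mem_supp_iff {v w : V} : w ∈ (Component.mk E v).supp ↔ conn E v w :=
  eq_comm.trans Component.mk_eq_mk

variable (E) in
def componentIsoSetoid : Setoid (Component E) where
  r q q' := ∃ f, IsIsoOn E f q.supp q'.supp
  iseqv := ⟨fun _ => ⟨id, .id _⟩,
    fun {q _} ⟨_, hf⟩ => haveI : Nonempty V := ⟨q.out⟩; ⟨_, hf.invFunOn⟩,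
    fun ⟨_, hf⟩ ⟨_, hg⟩ => ⟨_, hg.comp hf⟩⟩

lemma conn_mem_connClosure {U : Set V} {v w : V} (hv : v ∈ connClosure E U) (hvw : conn E v w) :
    w ∈ connClosure E U :=
  let ⟨u, hu, huv⟩ := hv
  ⟨u, hu, huv.trans hvw⟩

lemma supp_subset_connClosure {U : Set V} {v : V} (hv : v ∈ connClosure E U) :
    (Component.mk E v).supp ⊆ connClosure E U :=
  fun _ hw => conn_mem_connClosure hv (Component.mem_supp_iff.1 hw)

lemma IsIsoOn.isIsoOn_supp {U U' : Set V} {p : V → V}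
    (hp : IsIsoOn E p (connClosure E U) (connClosure E U')) {v : V}
    (hv : v ∈ connClosure E U) :
    IsIsoOn E p (Component.mk E v).supp (Component.mk E (p v)).supp := by
  suffices p '' (Component.mk E v).supp = (Component.mk E (p v)).supp from
    this ▸ hp.mono (supp_subset_connClosure hv)
  ext w
  simp only [mem_image, Component.mem_supp_iff]
  constructor
  · rintro ⟨x, hvx, rfl⟩
    induction hvx with
    | refl => exact .refl
    | @tail y x hvy hyx ih =>
      have hy := conn_mem_connClosure hv hvy
      exact ih.tail ((hp.adj_iff hy (conn_mem_connClosure hy (.single hyx))).2 hyx)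
  · intro hw
    induction hw with
    | refl => exact ⟨v, .refl, rfl⟩
    | @tail z w _ hzw ih =>
      obtain ⟨x, hvx, rfl⟩ := ih
      have hx := conn_mem_connClosure hv hvx
      obtain ⟨x', hx', rfl⟩ :=
        hp.bijOn.surjOn (conn_mem_connClosure (hp.bijOn.mapsTo hx) (.single hzw))
      exact ⟨x', hvx.tail ((hp.adj_iff hx hx').1 hzw), rfl⟩

noncomputable def relIsoOfComponents (σ : Component E ≃ Component E) (e : Component E → V → V)
    (he : ∀ q, IsIsoOn E (e q) q.supp (σ q).supp) : E ≃r E :=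
  have hmk : ∀ v, Component.mk E (e (Component.mk E v) v) = σ (Component.mk E v) :=
    fun v => (he _).bijOn.mapsTo (rfl : v ∈ (Component.mk E v).supp)
  { toEquiv := Equiv.ofBijective (fun v => e (Component.mk E v) v) <| by
      refine ⟨fun x y (h : e _ x = e _ y) => ?_, fun w => ?_⟩
      · have hxy : Component.mk E x = Component.mk E y :=
          σ.injective (by rw [← hmk, ← hmk, h])
        rw [hxy] at h
        exact (he _).bijOn.injOn hxy rfl h
      · have hw : w ∈ (σ (σ.symm (Component.mk E w))).supp := by
          rw [Equiv.apply_symm_apply]; rfl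
        obtain ⟨v, hv, hvw⟩ := (he _).bijOn.surjOn hw
        exact ⟨v, by simp only; rw [hv, hvw]⟩
    map_rel_iff' := fun {x y} => by
      change E (e _ x) (e _ y) ↔ E x y
      by_cases hxy : Component.mk E x = Component.mk E y
      · rw [hxy]
        exact (he _).rel_iff hxy rfl
      · refine iff_of_false (fun h => hxy (σ.injective ?_))
          (fun h => hxy (Component.mk_eq_mk.2 (.single (Or.inl h))))
        rw [← hmk, ← hmk]
        exact Component.mk_eq_mk.2 (.single (Or.inl h)) }

lemma relIsoOfComponents_apply (σ : Component E ≃ Component E) (e : Component E → V → V)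
    (he : ∀ q, IsIsoOn E (e q) q.supp (σ q).supp) (v : V) :
    relIsoOfComponents σ e he v = e (Component.mk E v) v :=
  rfl

/-- The components outside are matched isomorphism class by isomorphism class: in each class,
`p` matches finitely many components meeting `U` with equally many meeting `p '' U`. -/
theorem IsIsoOn.exists_relIso_extend {U : Set V} (hU : U.Finite) {p : V → V}
    (hp : IsIsoOn E p (connClosure E U) (connClosure E (p '' U))) :
    ∃ g : E ≃r E, EqOn g p (connClosure E U) := by
  classical
  set S : Set (Component E) := Component.mk E '' U
  have hS : ∀ q ∈ S, q.out ∈ connClosure E U := by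
    rintro _ ⟨u, hu, rfl⟩
    exact ⟨u, hu, Component.mk_eq_mk.1 (Component.mk_out _).symm⟩
  let f : S → Component E := fun q => Component.mk E (p q.1.out)
  have hpf : ∀ q : S, IsIsoOn E p q.1.supp (f q).supp := fun q => by
    simpa only [Component.mk_out] using hp.isIsoOn_supp (hS q q.2)
  have hf : Injective f := by
    intro q q' hqq'
    obtain ⟨x, hx, hxq'⟩ := (hp.isIsoOn_supp (hS q q.2)).bijOn.surjOn
      (show p q'.1.out ∈ (f q).supp from hqq'.symm)
    have hxC := supp_subset_connClosure (hS q q.2) hx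
    have := hp.bijOn.injOn hxC (hS q' q'.2) hxq'
    apply Subtype.ext
    rw [← Component.mk_out q'.1, ← this, hx, Component.mk_out]
  obtain ⟨σ, hσ, hσf⟩ :=
    Setoid.exists_perm_extend (componentIsoSetoid E) (hU.image _) ⟨f, hf⟩ fun q => ⟨p, hpf q⟩
  choose e he using hσ
  let e' : Component E → V → V := fun q => if q ∈ S then p else e q
  have he' : ∀ q, IsIsoOn E (e' q) q.supp (σ q).supp := by
    intro q
    by_cases hq : q ∈ S
    · simp only [e', if_pos hq]
      rw [hσf ⟨q, hq⟩]
      exact hpf ⟨q, hq⟩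
    · simpa only [e', if_neg hq] using he q
  refine ⟨relIsoOfComponents σ e' he', fun v ⟨u, hu, huv⟩ => ?_⟩
  have hv : Component.mk E v ∈ S := ⟨u, hu, Component.mk_eq_mk.2 huv⟩
  rw [relIsoOfComponents_apply]
  simp only [e', if_pos hv]

end Components

section BackAndForth

variable {D : Type} {ν : ℕ} {ar : Fin ν → ℕ} {rel : (i : Fin ν) → (Fin (ar i) → D) → Prop}
  {k : ℕ} {a b : Fin k → D}

lemma atomEquiv.comp (h : atomEquiv rel a b) {m : ℕ} (σ : Fin m → Fin k) :
    atomEquiv rel (a ∘ σ) (b ∘ σ) :=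
  ⟨fun i j => h.1 (σ i) (σ j), fun i f => h.2 i (σ ∘ f)⟩

lemma bfEquiv.forth {α β : Ordinal} (h : bfEquiv rel α k a b) (hβ : β < α) {l : ℕ}
    (c : Fin l → D) : ∃ d, bfEquiv rel β (k + l) (Fin.append a c) (Fin.append b d) := by
  rw [bfEquiv, if_neg (zero_le.trans_lt hβ).ne'] at h
  exact (h β hβ).1 l c

lemma bfEquiv.back {α β : Ordinal} (h : bfEquiv rel α k a b) (hβ : β < α) {l : ℕ}
    (d : Fin l → D) : ∃ c, bfEquiv rel β (k + l) (Fin.append a c) (Fin.append b d) := by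
  rw [bfEquiv, if_neg (zero_le.trans_lt hβ).ne'] at h
  exact (h β hβ).2 l d

lemma bfEquiv.atomEquiv {α : Ordinal} (h : bfEquiv rel α k a b) : atomEquiv rel a b := by
  rcases eq_or_ne α 0 with rfl | hα
  · rwa [bfEquiv, if_pos rfl] at h
  · obtain ⟨d, hd⟩ := h.forth (pos_iff_ne_zero.2 hα) (Fin.elim0 : Fin 0 → D)
    rw [bfEquiv, if_pos rfl] at hd
    have hleft : ∀ (u : Fin k → D) (w : Fin 0 → D), Fin.append u w ∘ Fin.castAdd 0 = u :=
      fun u w => funext (Fin.append_left u w)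
    simpa only [hleft] using hd.comp (Fin.castAdd 0)

end BackAndForth

section Approximations

variable {V : Type} {E : V → V → Prop}

lemma atomEquiv.edge_iff {N : ℕ} {x y : Fin N → V} (h : atomEquiv (graphRel E) x y)
    (i j : Fin N) : E (x i) (x j) ↔ E (y i) (y j) :=
  h.2 0 ![i, j]

lemma atomEquiv.exists_isIsoOn_range {N : ℕ} {x y : Fin N → V}
    (h : atomEquiv (graphRel E) x y) :
    ∃ f : V → V, f ∘ x = y ∧ IsIsoOn E f (range x) (range y) := by
  have hf : ∀ i, extend x y id (x i) = y i :=
    FactorsThrough.extend_apply (fun i j hij => (h.1 i j).1 hij) id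
  refine ⟨extend x y id, funext hf, ⟨?_, ?_, ?_⟩, ?_⟩
  · rintro _ ⟨i, rfl⟩
    exact ⟨i, (hf i).symm⟩
  · rintro _ ⟨i, rfl⟩ _ ⟨j, rfl⟩ hij
    rw [hf, hf] at hij
    exact (h.1 i j).2 hij
  · rintro _ ⟨i, rfl⟩
    exact ⟨x i, ⟨i, rfl⟩, hf i⟩
  · rintro _ ⟨i, rfl⟩ _ ⟨j, rfl⟩
    rw [hf, hf]
    exact (h.edge_iff i j).symm

lemma bfEquiv.exists_adj_lift {N : ℕ} {x y : Fin N → V} (h : bfEquiv (graphRel E) 1 N x y)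
    {f : V → V} (hf : f ∘ x = y) (j : Fin N) {w : V} (hw : E (y j) w ∨ E w (y j)) :
    ∃ w', (E (x j) w' ∨ E w' (x j)) ∧ ∀ j', x j' = w' → f w' = w := by
  obtain ⟨c, hc⟩ := h.back zero_lt_one fun _ : Fin 1 => w
  have hc := hc.atomEquiv
  have h₁ := hc.edge_iff (Fin.castAdd 1 j) (Fin.natAdd N 0)
  have h₂ := hc.edge_iff (Fin.natAdd N 0) (Fin.castAdd 1 j)
  simp only [Fin.append_left, Fin.append_right] at h₁ h₂
  refine ⟨c 0, (or_congr h₁ h₂).2 hw, fun j' hj' => ?_⟩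
  have hj := hc.1 (Fin.castAdd 1 j') (Fin.natAdd N 0)
  simp only [Fin.append_left, Fin.append_right] at hj
  rw [← hj', ← comp_apply (f := f), hf]
  exact hj.1 hj'

variable {k : ℕ} {a b : Fin k → V}

variable (E a b) in
def ballApprox (n : ℕ) : Set (V → V) :=
  {f | f ∘ a = b ∧ IsIsoOn E f (ball E (range a) n) (ball E (range b) n)}

lemma ballApprox_antitone : Antitone (ballApprox E a b) := by
  intro m n hmn f ⟨hfa, hf⟩
  have himg : f '' range a = range b := by rw [← range_comp, hfa]
  have key : f '' ball E (range a) m = ball E (range b) m := by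
    rw [hf.image_ball (ball_mono _ hmn) (by rw [himg]; exact ball_mono _ hmn), himg]
  exact ⟨hfa, key ▸ hf.mono (ball_mono _ hmn)⟩

lemma ballApprox_nonempty (hlf : LocallyFiniteGraph E) (h : bfEquiv (graphRel E) 2 k a b)
    (n : ℕ) : (ballApprox E a b n).Nonempty := by
  obtain ⟨N, c, hc⟩ := (ball_finite hlf (finite_range a) n).fin_embedding
  obtain ⟨d, hd⟩ := h.forth one_lt_two c
  set x := Fin.append a c
  set y := Fin.append b d
  have hx : range x = ball E (range a) n := by
    rw [range_append, hc, union_eq_right.2 (subset_ball _ n)]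
  obtain ⟨f, hfxy, hf⟩ := hd.atomEquiv.exists_isIsoOn_range
  have hfa : f ∘ a = b := funext fun i => by
    simpa only [x, y, comp_apply, Fin.append_left] using congrFun hfxy (Fin.castAdd N i)
  rw [hx] at hf
  have hlift : ∀ r < n, ∀ v ∈ ball E (range a) r, ∀ w, (E (f v) w ∨ E w (f v)) →
      ∃ v', (E v v' ∨ E v' v) ∧ f v' = w := by
    intro r hr v hv w hw
    obtain ⟨j, rfl⟩ : v ∈ range x := hx ▸ ball_mono _ hr.le hv
    have hfx : f (x j) = y j := congrFun hfxy j
    obtain ⟨w', hadj, hw'⟩ := hd.exists_adj_lift hfxy j (hfx ▸ hw)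
    obtain ⟨j', hj'⟩ : w' ∈ range x := hx ▸ ball_mono _ hr (Or.inr ⟨x j, hv, hadj⟩)
    exact ⟨w', hadj, hw' j' hj'⟩
  have himg : f '' range a = range b := by rw [← range_comp, hfa]
  have key : f '' ball E (range a) n = ball E (range b) n := by
    rw [← himg]
    exact subset_antisymm
      (image_ball_subset_ball_image subset_rfl fun u hu v hv => (hf.rel_iff hu hv).2)
      (ball_image_subset_image_ball hlift)
  exact ⟨f, hfa, key ▸ hf.mono subset_rfl⟩

open CategoryTheory in
variable (E a b) in
/-- Restricting to the balls makes the objects finite, so that König's lemma applies. -/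
def ballApproxSystem : ℕᵒᵖ ⥤ Type where
  obj n := (fun f : V → V => (ball E (range a) n.unop).domRestrict f) '' ballApprox E a b n.unop
  map {m n} h := TypeCat.ofHom fun g => ⟨g.1 ∘ inclusion (ball_mono _ (leOfHom h.unop)), by
    obtain ⟨f, hf, hfg⟩ := g.2
    exact ⟨f, ballApprox_antitone (leOfHom h.unop) hf, by rw [← hfg]; rfl⟩⟩
  map_id _ := rfl
  map_comp _ _ := rfl

open CategoryTheory in
lemma exists_coherent_ballApprox (hlf : LocallyFiniteGraph E)
    (h : bfEquiv (graphRel E) 2 k a b) :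
    ∃ f : ℕ → V → V, (∀ n, f n ∈ ballApprox E a b n) ∧
      ∀ ⦃m n⦄, m ≤ n → EqOn (f m) (f n) (ball E (range a) m) := by
  have : ∀ n, Finite ((ballApproxSystem E a b).obj n) := fun n => by
    have := (ball_finite hlf (finite_range a) n.unop).to_subtype
    refine ((Set.Finite.pi fun _ => ball_finite hlf (finite_range b) n.unop).subset ?_).to_subtype
    rintro _ ⟨f, hf, rfl⟩ x -
    exact hf.2.bijOn.mapsTo x.2
  have : ∀ n, Nonempty ((ballApproxSystem E a b).obj n) := fun n =>
    let ⟨f, hf⟩ := ballApprox_nonempty hlf h n.unop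
    ⟨⟨_, f, hf, rfl⟩⟩
  obtain ⟨u, hu⟩ := nonempty_sections_of_finite_inverse_system (ballApproxSystem E a b)
  choose f hf hfu using fun n : ℕ => (u (Opposite.op n)).2
  refine ⟨f, hf, fun m n hmn x hx => ?_⟩
  have hun : (u (Opposite.op n)).1 ∘ inclusion (ball_mono _ hmn) = (u (Opposite.op m)).1 :=
    congrArg Subtype.val (hu (homOfLE hmn).op)
  rw [← hfu, ← hfu] at hun
  exact (congrFun hun ⟨x, hx⟩).symm

lemma exists_isIsoOn_connClosure (hlf : LocallyFiniteGraph E)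
    (h : bfEquiv (graphRel E) 2 k a b) :
    ∃ p : V → V, p ∘ a = b ∧
      IsIsoOn E p (connClosure E (range a)) (connClosure E (range b)) := by
  obtain ⟨f, hf, hcoh⟩ := exists_coherent_ballApprox hlf h
  let p : V → V := fun v => f (sInf {n | v ∈ ball E (range a) n}) v
  have hp : ∀ n, EqOn (f n) p (ball E (range a) n) := fun n v hv =>
    (hcoh (Nat.sInf_le hv) (Nat.sInf_mem (s := {n | v ∈ ball E (range a) n}) ⟨n, hv⟩)).symm
  refine ⟨p, funext fun i => (hp 0 ⟨i, rfl⟩).symm.trans (congrFun (hf 0).1 i), ?_⟩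
  rw [← iUnion_ball, ← iUnion_ball]
  exact IsIsoOn.iUnion (ball_mono _).directed_le fun n => (hf n).2.congr (hp n)

theorem exists_relIso_of_bfEquiv_two (hlf : LocallyFiniteGraph E)
    (h : bfEquiv (graphRel E) 2 k a b) : ∃ g : E ≃r E, ∀ i, g (a i) = b i := by
  obtain ⟨p, hpa, hp⟩ := exists_isIsoOn_connClosure hlf h
  have himg : p '' range a = range b := by rw [← range_comp, hpa]
  have hp' : IsIsoOn E p (connClosure E (range a)) (connClosure E (p '' range a)) := by
    rwa [himg]
  obtain ⟨g, hg⟩ := hp'.exists_relIso_extend (finite_range a)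
  exact ⟨g, fun i => (hg ⟨a i, ⟨i, rfl⟩, .refl⟩).trans (congrFun hpa i)⟩

end Approximations

lemma scottRank_le_add_one {D : Type} {ν : ℕ} {ar : Fin ν → ℕ}
    {rel : (i : Fin ν) → (Fin (ar i) → D) → Prop} {α : Ordinal}
    (h : ∀ (k : ℕ) (a b : Fin k → D), bfEquiv rel α k a b →
      ∃ g : D ≃ D, IsAutomorphism rel g ∧ ∀ i, g (a i) = b i) :
    scottRank rel ≤ α + 1 :=
  csInf_le' fun k a => lt_of_le_of_lt (csInf_le' (h k a) : tupleSR rel a ≤ α) (lt_add_one α)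

/-- **Proposition 9.** A locally finite directed graph has Scott rank at most `3`; indeed any
two tuples that are `≡²`-equivalent are in the same automorphism orbit. -/
theorem locally_finite_scott_rank_le_three {V : Type} (E : V → V → Prop)
    (hlf : LocallyFiniteGraph E) :
    scottRank (graphRel E) ≤ 3 ∧
    ∀ (k : ℕ) (a b : Fin k → V), bfEquiv (graphRel E) 2 k a b →
      ∃ g : V ≃ V, (∀ x y, E x y ↔ E (g x) (g y)) ∧ ∀ i, g (a i) = b i := by
  refine ⟨(scottRank_le_add_one (α := 2) fun k a b h => ?_).trans_eq (by norm_num),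
    fun k a b h => ?_⟩
  all_goals
    obtain ⟨g, hg⟩ := exists_relIso_of_bfEquiv_two hlf h
    exact ⟨g.toEquiv, fun _ _ => g.map_rel_iff.symm, hg⟩

end AutoStruct
end

section
/- For each n ≥ 1, the tree T_n whose domain is the language a₁* a₂* ⋯ aₙ* over the n-letter alphabet {a₁,…,aₙ}, partially ordered by the prefix relation, is an automatic partial order tree whose Cantor–Bendixson rank is exactly n. -/
namespace AutoStruct

/-!
Sorted words form a local language (membership is decided by single letters and adjacent
pairs), and so do the convolutions `conv2 u (u ++ t)` of prefix pairs; local languages are regular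
by Myhill–Nerode. A node `w` of a subtree `X` of `T_n` lies on two distinct infinite paths iff `X`
continues `w` by two distinct letters `a < b` bounding the letters of `w` (the two paths can be
taken to be `w a^ω` and `w b^ω`). Hence the `k`-th derivative of `T_n` is the tree over the first
`n - k` letters as long as `k < n`, and the derivatives are empty from stage `n` on.
-/

section LocalLanguage

variable {α : Type}

def localLang (S : α → Prop) (R : α → α → Prop) : Set (List α) :=
  {w | (∀ a ∈ w, S a) ∧ List.IsChain R w}

variable {S : α → Prop} {R : α → α → Prop}

theorem append_mem_localLang_iff {u v : List α} :
    u ++ v ∈ localLang S R ↔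
      u ∈ localLang S R ∧ v ∈ localLang S R ∧ ∀ a ∈ u.getLast?, ∀ b ∈ v.head?, R a b := by
  simp only [localLang, Set.mem_ofPred_eq, List.mem_append, List.isChain_append]
  grind

theorem cons_mem_localLang_iff {a : α} {w : List α} :
    a :: w ∈ localLang S R ↔ S a ∧ w ∈ localLang S R ∧ ∀ b ∈ w.head?, R a b := by
  simp only [localLang, Set.mem_ofPred_eq, List.mem_cons, List.isChain_cons]
  grind

theorem map_mem_localLang_iff {β : Type} {f : β → α} {w : List β} :
    w.map f ∈ localLang S R ↔ w ∈ localLang (S ∘ f) (fun a b => R (f a) (f b)) := by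
  simp [localLang, List.isChain_map]

/-- By Myhill–Nerode: the left quotient by `u` depends only on whether `u` lies in the language
and on its last letter. -/
theorem isRegularLang_localLang [Finite α] (S : α → Prop) (R : α → α → Prop) :
    IsRegularLang (localLang S R) := by
  let quot : Prop × Option α → Language α := fun p =>
    {v | p.1 ∧ v ∈ localLang S R ∧ ∀ a ∈ p.2, ∀ b ∈ v.head?, R a b}
  refine Language.IsRegular.of_finite_range_leftQuotient (L := localLang S R)
    ((Set.finite_range quot).subset ?_)
  rintro _ ⟨u, rfl⟩
  exact ⟨(u ∈ localLang S R, u.getLast?), by ext v; exact append_mem_localLang_iff.symm⟩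

end LocalLanguage

section Convolution
variable {α : Type}

theorem conv2_self_append (u t : List α) :
    conv2 u (u ++ t) = u.map (fun a => (some a, some a)) ++ t.map (fun a => (none, some a)) := by
  refine List.ext_getElem? fun k => ?_
  have hmax : max u.length (u ++ t).length = u.length + t.length := by simp
  rw [conv2, hmax, List.getElem?_map]
  rcases lt_or_ge k (u.length + t.length) with hk | hk
  · rw [List.getElem?_range hk]
    rcases lt_or_ge k u.length with hu | hu
    · simp [List.getElem?_append_left, hu]
    · have hkt : k - u.length < t.length := by omega
      simp [List.getElem?_append_right, hu, List.getElem?_eq_getElem hkt]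
  · rw [List.getElem?_eq_none (by simpa using hk), List.getElem?_eq_none (by simpa using hk)]
    rfl

variable {S : α → Prop} {R : α → α → Prop}

def prefixConvLang (S : α → Prop) (R : α → α → Prop) : Set (List (Option α × Option α)) :=
  localLang (fun x => ∃ a, S a ∧ x.2 = some a ∧ (x.1 = some a ∨ x.1 = none))
    (fun x y => (∀ a ∈ x.2, ∀ b ∈ y.2, R a b) ∧ (x.1 = none → y.1 = none))

theorem mem_prefixConvLang_iff {w : List (Option α × Option α)} :
    w ∈ prefixConvLang S R ↔ ∃ u t, u ++ t ∈ localLang S R ∧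
      w = u.map (fun a => (some a, some a)) ++ t.map (fun a => (none, some a)) := by
  constructor
  · intro hw
    induction w with
    | nil => exact ⟨[], [], by simp [localLang], rfl⟩
    | cons x w ih =>
      obtain ⟨⟨a, hSa, hx2, hx1⟩, hw, hxw⟩ := cons_mem_localLang_iff.1 hw
      obtain ⟨u, t, hut, rfl⟩ := ih hw
      obtain ⟨x1, x2⟩ := x
      simp only at hx1 hx2 hxw
      subst hx2
      have hhead : ∀ b ∈ (u ++ t).head?, R a b := by
        rcases u with _ | ⟨c, u⟩ <;> rcases t with _ | ⟨d, t⟩ <;> simp_all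
      rcases hx1 with rfl | rfl
      · exact ⟨a :: u, t, cons_mem_localLang_iff.2 ⟨hSa, hut, hhead⟩, rfl⟩
      · rcases u with _ | ⟨c, u⟩
        · exact ⟨[], a :: t, cons_mem_localLang_iff.2 ⟨hSa, hut, hhead⟩, rfl⟩
        · simp at hxw
  · rintro ⟨u, t, h, rfl⟩
    obtain ⟨hu, ht, hut⟩ := append_mem_localLang_iff.1 h
    refine append_mem_localLang_iff.2 ⟨?_, ?_, ?_⟩
    · rw [map_mem_localLang_iff]
      simpa [Function.comp_def] using hu
    · rw [map_mem_localLang_iff]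
      simpa [Function.comp_def] using ht
    · simpa using hut

end Convolution

theorem isRegularRel2_prefix_localLang {α : Type} [Finite α] (S : α → Prop)
    (R : α → α → Prop) :
    IsRegularRel2 (fun u v => u ∈ localLang S R ∧ v ∈ localLang S R ∧ u <+: v) := by
  have hconv : {w | ∃ u v, (u ∈ localLang S R ∧ v ∈ localLang S R ∧ u <+: v) ∧
      w = conv2 u v} = prefixConvLang S R := by
    ext w
    rw [mem_prefixConvLang_iff]
    constructor
    · rintro ⟨u, _, ⟨-, hv, t, rfl⟩, rfl⟩
      exact ⟨u, t, hv, conv2_self_append u t⟩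
    · rintro ⟨u, t, hut, rfl⟩
      exact ⟨u, u ++ t, ⟨(append_mem_localLang_iff.1 hut).1, hut, List.prefix_append u t⟩,
        (conv2_self_append u t).symm⟩
  rw [IsRegularRel2, hconv]
  exact isRegularLang_localLang _ _

theorem isPOTree_prefix {α : Type} {D : Set (List α)} (hD : [] ∈ D) :
    IsPOTree (fun u v : D => (u : List α) <+: ↑v) := by
  refine ⟨fun u => List.prefix_refl _, fun u v w => List.IsPrefix.trans,
    fun u v huv hvu => Subtype.ext (huv.eq_of_length (huv.length_le.antisymm hvu.length_le)),
    ⟨⟨[], hD⟩, fun u => List.nil_prefix⟩,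
    fun v => ⟨?_, fun u w hu hw => List.prefix_or_prefix_of_prefix hu hw⟩⟩
  have : {u : List α | u <+: v}.Finite := by
    simpa only [List.mem_inits] using (v : List α).inits.finite_toSet
  exact this.preimage (f := Subtype.val) Subtype.val_injective.injOn

section CantorBendixson
variable {T : Type} (le : T → T → Prop)

theorem poDerivIter_zero : poDerivIter le 0 = Set.univ :=
  Ordinal.limitRecOn_zero _ _ _

theorem poDerivIter_add_one (o : Ordinal) :
    poDerivIter le (o + 1) = poDeriv le (poDerivIter le o) :=
  Ordinal.limitRecOn_add_one _ _ _ _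

variable {le}

theorem poDerivIter_natCast {X : ℕ → Set T} (h0 : X 0 = Set.univ)
    (hsucc : ∀ k, poDeriv le (X k) = X (k + 1)) (k : ℕ) : poDerivIter le k = X k := by
  induction k with
  | zero => rw [Nat.cast_zero, poDerivIter_zero, h0]
  | succ k ih => rw [Nat.cast_add_one, poDerivIter_add_one, ih, hsucc]

theorem CBrankPO_eq_of_poDeriv_eq {X : ℕ → Set T} (h0 : X 0 = Set.univ)
    (hsucc : ∀ k, poDeriv le (X k) = X (k + 1)) {N : ℕ} (hstable : X (N + 1) = X N)
    (hstrict : ∀ k < N, X (k + 1) ≠ X k) : CBrankPO le = N := by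
  have hiter (k : ℕ) : poDerivIter le (k + 1) = poDerivIter le k ↔ X (k + 1) = X k := by
    rw [← Nat.cast_add_one, poDerivIter_natCast h0 hsucc, poDerivIter_natCast h0 hsucc]
  refine le_antisymm (csInf_le' ((hiter N).2 hstable))
    (le_csInf ⟨_, (hiter N).2 hstable⟩ fun o ho => ?_)
  by_contra! hlt
  obtain ⟨k, rfl⟩ := Ordinal.lt_omega0.1 (hlt.trans (Ordinal.natCast_lt_omega0 N))
  exact hstrict k (by exact_mod_cast hlt) ((hiter k).1 ho)

end CantorBendixson

section Forks
variable {β : Type}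

theorem exists_fork_of_not_prefix :
    ∀ {u v : List β}, ¬ u <+: v → ¬ v <+: u →
      ∃ c a b, a ≠ b ∧ c ++ [a] <+: u ∧ c ++ [b] <+: v
  | [], _, h, _ | _ :: _, [], _, h => absurd List.nil_prefix h
  | x :: u, y :: v, huv, hvu => by
    by_cases hxy : x = y
    · subst hxy
      obtain ⟨c, a, b, hab, ha, hb⟩ :=
        exists_fork_of_not_prefix (by simpa using huv) (by simpa using hvu)
      exact ⟨x :: c, a, b, hab, by simpa using ha, by simpa using hb⟩
    · exact ⟨[], x, y, hxy, by simp, by simp⟩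

theorem prefix_of_fork {w u v c : List β} {a b : β} (hab : a ≠ b) (hwu : w <+: u)
    (hwv : w <+: v) (ha : c ++ [a] <+: u) (hb : c ++ [b] <+: v) : w <+: c := by
  have hav : ¬ c ++ [a] <+: v := fun ha' =>
    hab (by simpa using List.prefix_of_prefix_length_le ha' hb (by simp))
  rcases List.prefix_or_prefix_of_prefix hwu ha with h | h
  · rcases List.prefix_concat_iff.1 h with rfl | h
    · exact absurd hwv hav
    · exact h
  · exact absurd (h.trans hwv) hav

theorem prefix_of_forall_prefix_succ {p : ℕ → List β} (h : ∀ j, p j <+: p (j + 1)) :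
    ∀ j, p 0 <+: p j
  | 0 => List.prefix_refl _
  | j + 1 => (prefix_of_forall_prefix_succ h j).trans (h j)

end Forks

section SortedWords
variable {α : Type} [LinearOrder α]

abbrev sortedWords (α : Type) [LinearOrder α] : Set (List α) := {w | w.Pairwise (· ≤ ·)}

theorem localLang_true_le : localLang (fun _ : α => True) (· ≤ ·) = sortedWords α := by
  ext w
  simp [localLang, List.isChain_iff_pairwise]

theorem le_of_append_singleton_prefix {c u : List α} {a : α} (hu : u ∈ sortedWords α)
    (h : c ++ [a] <+: u) : ∀ x ∈ c, x ≤ a := fun x hx =>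
  (List.pairwise_append.1 (hu.sublist h.sublist)).2.2 x hx a (List.mem_singleton_self a)

theorem exists_lt_of_mem_poDeriv {X : Set (sortedWords α)} {w : sortedWords α}
    (hw : w ∈ poDeriv (fun u v : sortedWords α => u.1 <+: v.1) X) :
    ∃ a b, a < b ∧ (∀ x ∈ w.1, x ≤ a) ∧ ∃ v ∈ X, b ∈ v.1 := by
  obtain ⟨-, p, q, rfl, hq0, hpX, hqX, hp, hq, j, k, hpq, hqp⟩ := hw
  obtain ⟨c, a, b, hab, ha, hb⟩ := exists_fork_of_not_prefix hpq hqp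
  have hwq : (p 0).1 <+: (q k).1 := hq0 ▸ prefix_of_forall_prefix_succ (fun i => (hq i).1) k
  have hwc : (p 0).1 <+: c :=
    prefix_of_fork hab (prefix_of_forall_prefix_succ (fun i => (hp i).1) j) hwq ha hb
  have hwa : ∀ x ∈ (p 0).1, x ≤ a := fun x hx =>
    le_of_append_singleton_prefix (p j).2 ha x (hwc.subset hx)
  have hwb : ∀ x ∈ (p 0).1, x ≤ b := fun x hx =>
    le_of_append_singleton_prefix (q k).2 hb x (hwc.subset hx)
  rcases hab.lt_or_gt with h | h
  · exact ⟨a, b, h, hwa, q k, hqX k, hb.subset (by simp)⟩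
  · exact ⟨b, a, h, hwb, p j, hpX j, ha.subset (by simp)⟩

def ray (w : sortedWords α) (a : α) (ha : ∀ x ∈ w.1, x ≤ a) (j : ℕ) : sortedWords α :=
  ⟨w.1 ++ List.replicate j a,
    List.pairwise_append.2 ⟨w.2, List.pairwise_replicate.2 (Or.inr le_rfl),
      fun x hx _ hy => (List.eq_of_mem_replicate hy).symm ▸ ha x hx⟩⟩

theorem mem_poDeriv_of_rays {X : Set (sortedWords α)} {w : sortedWords α} {a b : α}
    (hab : a ≠ b) (ha : ∀ x ∈ w.1, x ≤ a) (hb : ∀ x ∈ w.1, x ≤ b) (haX : ∀ j, ray w a ha j ∈ X)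
    (hbX : ∀ j, ray w b hb j ∈ X) :
    w ∈ poDeriv (fun u v : sortedWords α => u.1 <+: v.1) X := by
  have hray0 (c : α) (hc : ∀ x ∈ w.1, x ≤ c) : ray w c hc 0 = w := by simp [ray]
  have hstep (c : α) (hc : ∀ x ∈ w.1, x ≤ c) (j : ℕ) :
      (ray w c hc j).1 <+: (ray w c hc (j + 1)).1 ∧ ray w c hc j ≠ ray w c hc (j + 1) := by
    refine ⟨by simp [ray, List.replicate_succ'], fun h => ?_⟩
    simpa [ray] using congrArg (fun v : sortedWords α => v.1.length) h
  refine ⟨hray0 a ha ▸ haX 0, ray w a ha, ray w b hb, hray0 a ha, hray0 b hb, haX, hbX,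
    hstep a ha, hstep b hb, 1, 1, ?_, ?_⟩ <;> simp [ray, hab, hab.symm]

end SortedWords

section Layers
variable {n : ℕ}

/-- `cbLayer n k` is `T_{n-k}`, the words over the first `n - k` letters, made empty once
`k ≥ n`: it is the `k`-th derivative of `T_n`. -/
def cbLayer (n k : ℕ) : Set (sortedWords (Fin n)) :=
  {w | k < n ∧ ∀ x ∈ w.1, (x : ℕ) + k < n}

theorem poDeriv_cbLayer (k : ℕ) :
    poDeriv (fun u v : sortedWords (Fin n) => u.1 <+: v.1) (cbLayer n k) = cbLayer n (k + 1) := by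
  ext w
  constructor
  · intro hw
    obtain ⟨a, b, hab, hwa, v, ⟨-, hv⟩, hbv⟩ := exists_lt_of_mem_poDeriv hw
    have hb := hv b hbv
    have hab' : (a : ℕ) < b := hab
    refine ⟨by omega, fun x hx => ?_⟩
    have hxa : (x : ℕ) ≤ a := hwa x hx
    omega
  · rintro ⟨hk, hw⟩
    have hwa : ∀ x ∈ w.1, x ≤ ⟨n - k - 2, by omega⟩ := fun x hx => by
      have := hw x hx
      simp only [Fin.le_def]
      omega
    have hwb : ∀ x ∈ w.1, x ≤ ⟨n - k - 1, by omega⟩ := fun x hx =>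
      (hwa x hx).trans (by simp only [Fin.le_def]; omega)
    refine mem_poDeriv_of_rays (by simp only [ne_eq, Fin.mk.injEq]; omega) hwa hwb ?_ ?_ <;>
    · intro j
      refine ⟨by omega, fun x hx => ?_⟩
      rcases List.mem_append.1 hx with hx | hx
      · have := hw x hx
        omega
      · rw [List.eq_of_mem_replicate hx]
        simp only
        omega

theorem cbLayer_zero (hn : 1 ≤ n) : cbLayer n 0 = Set.univ :=
  Set.eq_univ_of_forall fun _ => ⟨hn, fun x _ => x.2⟩

theorem cbLayer_eq_empty {k : ℕ} (hk : n ≤ k) : cbLayer n k = ∅ :=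
  Set.eq_empty_of_forall_notMem fun _ hw => (hk.trans_lt hw.1).false

theorem cbLayer_succ_ne {k : ℕ} (hk : k < n) : cbLayer n (k + 1) ≠ cbLayer n k := by
  intro h
  have hmem : (⟨[⟨n - 1 - k, by omega⟩], List.pairwise_singleton _ _⟩ : sortedWords (Fin n)) ∈
      cbLayer n k := ⟨hk, by simp only [List.mem_singleton, forall_eq]; omega⟩
  rw [← h] at hmem
  have := hmem.2 _ (List.mem_singleton_self _)
  simp only at this
  omega

end Layers

/-- **Example.** For each `n ≥ 1`, the tree with domain `a₁* a₂* ⋯ aₙ*` (the nondecreasing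
words over an `n`-letter alphabet) under the prefix order is an automatic partial order tree
of Cantor–Bendixson rank exactly `n`. -/
theorem prefix_tree_CB_rank (n : ℕ) (hn : 1 ≤ n) :
    IsRegularLang {w : List (Fin n) | List.Pairwise (· ≤ ·) w} ∧
    IsRegularRel2 (fun u v : List (Fin n) =>
      List.Pairwise (· ≤ ·) u ∧ List.Pairwise (· ≤ ·) v ∧ u <+: v) ∧
    IsPOTree (fun u v : ↥{w : List (Fin n) | List.Pairwise (· ≤ ·) w} =>
      (u : List (Fin n)) <+: ↑v) ∧
    CBrankPO (fun u v : ↥{w : List (Fin n) | List.Pairwise (· ≤ ·) w} =>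
      (u : List (Fin n)) <+: ↑v) = n := by
  have hlang := isRegularLang_localLang (fun _ : Fin n => True) (· ≤ ·)
  have hrel := isRegularRel2_prefix_localLang (fun _ : Fin n => True) (· ≤ ·)
  rw [localLang_true_le] at hlang hrel
  refine ⟨hlang, hrel, isPOTree_prefix List.Pairwise.nil,
    CBrankPO_eq_of_poDeriv_eq (cbLayer_zero hn) poDeriv_cbLayer ?_ fun k => cbLayer_succ_ne⟩
  rw [cbLayer_eq_empty le_rfl, cbLayer_eq_empty n.le_succ]

end AutoStruct
end
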